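/- arXiv:2308.12365 — 5 statements merged into one kernel-verified Lean document; each statement's English description precedes it below -/
import Mathlib

section
/- Every locally finite open cover U of a normal topological space X has an open star-refinement W: an open cover W such that for every W₀ ∈ W there exists U₀ ∈ U with St(W₀, W) ⊆ U₀, where St(A, W) denotes the union of all members of W intersecting A. -/
/-!
Shrink `U` to an open cover `V` with `closure (V a) ⊆ U a`. For `x : X` and an index `a`, the cell
`V a ∩ ⋂ {U b | x ∈ closure (V b)} \ ⋃ {closure (V b) | x ∉ closure (V b)}` is open by local
finiteness. A cell built at `y` misses every `V a` with `y ∉ closure (V a)`, so if it meets the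
cell built at `x` from `V a` it lies in `U a`; hence the star of that second cell lies in `U a`.
-/

open Set

section StarCell

variable {X κ : Type*} [TopologicalSpace X] (U V : κ → Set X)

def starCell (a : κ) (x : X) : Set X :=
  (V a ∩ ⋂ b ∈ {b | x ∈ closure (V b)}, U b) \ ⋃ b ∈ {b | x ∉ closure (V b)}, closure (V b)

variable {U V}

theorem starCell_subset (a : κ) (x : X) : starCell U V a x ⊆ V a :=
  fun _ hz => hz.1.1

theorem isOpen_starCell (hU : ∀ a, IsOpen (U a)) (hV : ∀ a, IsOpen (V a))
    (hVlf : LocallyFinite V) (a : κ) (x : X) : IsOpen (starCell U V a x) := by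
  have hfin : {b | x ∈ closure (V b)}.Finite := hVlf.closure.point_finite x
  have hclosed : IsClosed (⋃ b ∈ {b | x ∉ closure (V b)}, closure (V b)) := by
    rw [biUnion_eq_iUnion]
    exact (hVlf.closure.comp_injective Subtype.val_injective).isClosed_iUnion
      fun _ => isClosed_closure
  exact ((hV a).inter (hfin.isOpen_biInter fun b _ => hU b)).sdiff hclosed

theorem self_mem_starCell (hVU : ∀ a, closure (V a) ⊆ U a) {a : κ} {x : X} (hx : x ∈ V a) :
    x ∈ starCell U V a x :=
  ⟨⟨hx, mem_biInter fun b hb => hVU b hb⟩, fun h => by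
    obtain ⟨b, hb, hxb⟩ := mem_iUnion₂.mp h
    exact hb hxb⟩

theorem mem_closure_of_starCell_inter_nonempty {a b : κ} {y : X}
    (h : (starCell U V b y ∩ V a).Nonempty) : y ∈ closure (V a) := by
  obtain ⟨z, hz, hza⟩ := h
  by_contra hy
  exact hz.2 (mem_biUnion hy (subset_closure hza))

theorem starCell_subset_of_mem_closure {a b : κ} {y : X} (hy : y ∈ closure (V a)) :
    starCell U V b y ⊆ U a :=
  fun _ hz => mem_iInter₂.mp hz.1.2 a hy

theorem starCell_subset_of_inter_starCell_nonempty {a b : κ} {x y : X}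
    (h : (starCell U V b y ∩ starCell U V a x).Nonempty) : starCell U V b y ⊆ U a :=
  starCell_subset_of_mem_closure <| mem_closure_of_starCell_inter_nonempty <|
    h.mono <| inter_subset_inter_right _ (starCell_subset a x)

theorem exists_open_star_refinement_of_closure_subset (hU : ∀ a, IsOpen (U a))
    (hV : ∀ a, IsOpen (V a)) (hVlf : LocallyFinite V) (hVcov : ⋃ a, V a = univ)
    (hVU : ∀ a, closure (V a) ⊆ U a) :
    ∃ 𝒲 : Set (Set X), (∀ W ∈ 𝒲, IsOpen W) ∧ ⋃₀ 𝒲 = univ ∧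
      ∀ W₀ ∈ 𝒲, ∃ a, ⋃₀ {W' ∈ 𝒲 | (W' ∩ W₀).Nonempty} ⊆ U a := by
  refine ⟨range fun p : κ × X => starCell U V p.1 p.2, ?_, ?_, ?_⟩
  · rintro _ ⟨⟨a, x⟩, rfl⟩
    exact isOpen_starCell hU hV hVlf a x
  · refine eq_univ_of_forall fun x => ?_
    obtain ⟨a, hx⟩ := mem_iUnion.mp (hVcov.symm ▸ mem_univ x)
    exact ⟨_, ⟨(a, x), rfl⟩, self_mem_starCell hVU hx⟩
  · rintro _ ⟨⟨a, x⟩, rfl⟩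
    refine ⟨a, sUnion_subset ?_⟩
    rintro _ ⟨⟨⟨b, y⟩, rfl⟩, hne⟩
    exact starCell_subset_of_inter_starCell_nonempty hne

end StarCell

theorem exists_open_star_refinement {X : Type*} [TopologicalSpace X] [NormalSpace X]
    {κ : Type*} (U : κ → Set X) (hopen : ∀ a, IsOpen (U a))
    (hlf : LocallyFinite U) (hcov : ⋃ a, U a = Set.univ) :
    ∃ 𝒲 : Set (Set X), (∀ W ∈ 𝒲, IsOpen W) ∧ ⋃₀ 𝒲 = Set.univ ∧
      ∀ W₀ ∈ 𝒲, ∃ a, ⋃₀ {W' ∈ 𝒲 | (W' ∩ W₀).Nonempty} ⊆ U a := by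
  obtain ⟨V, hVcov, hVopen, hVU⟩ :=
    exists_iUnion_eq_closure_subset hopen hlf.point_finite hcov
  have hVlf : LocallyFinite V := hlf.subset fun a => subset_closure.trans (hVU a)
  exact exists_open_star_refinement_of_closure_subset hopen hVopen hVlf hVcov hVU
end

section
/- Let X be a paracompact Hausdorff space and (U_α)_{α∈κ} an open cover of X. Then there exists a locally finite open refinement V = ⋃_{i∈ℕ} V_i covering X, where each V_i = (V_{i,α})_{α∈κ} is a discrete family of open sets with V_{i,α} ⊆ U_α for all α ∈ κ. -/
/-!
A partition of unity `(f a)` subordinate to `U` gives a continuous map `x ↦ (f a x)ₐ` into the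
metric space `ℓ^∞(κ)`; the open sets `{y | y a > 0}` cover its range and pull back into `U a`.
Since preimages under a continuous map preserve openness, local finiteness and disjointness of
closures, it suffices to treat pseudometric spaces. There one follows Stone's construction as
presented by Rudin: well-order `κ`; at stage `n` take the balls of radius `2⁻ⁿ` about the
points `x` not yet covered whose least index `a` with `x ∈ O a` satisfies `B(x, 3 · 2⁻ⁿ) ⊆ O a`.
Centres of different indices at the same stage are `3 · 2⁻ⁿ` apart, so the stage-`n` sets are
`2⁻ⁿ`-separated, and a small ball around a point of a stage-`n` set meets no later stage.
-/

open Set Function Topology ENNReal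

section SigmaDiscrete

variable {X κ : Type*} [TopologicalSpace X]

structure IsSigmaDiscreteRefinement (U : κ → Set X) (V : ℕ → κ → Set X) : Prop where
  isOpen : ∀ i a, IsOpen (V i a)
  subset : ∀ i a, V i a ⊆ U a
  pairwise_disjoint_closure : ∀ i, Pairwise (Disjoint on fun a => closure (V i a))
  locallyFinite : LocallyFinite fun p : ℕ × κ => V p.1 p.2
  iUnion_eq_univ : ⋃ i, ⋃ a, V i a = univ

namespace IsSigmaDiscreteRefinement

variable {U U' : κ → Set X} {V : ℕ → κ → Set X}

theorem mono (hV : IsSigmaDiscreteRefinement U V) (hUU' : ∀ a, U a ⊆ U' a) :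
    IsSigmaDiscreteRefinement U' V :=
  { hV with subset := fun i a => (hV.subset i a).trans (hUU' a) }

theorem preimage {Y : Type*} [TopologicalSpace Y] {U : κ → Set Y} {V : ℕ → κ → Set Y}
    (hV : IsSigmaDiscreteRefinement U V) {Φ : X → Y} (hΦ : Continuous Φ) :
    IsSigmaDiscreteRefinement (fun a => Φ ⁻¹' U a) fun i a => Φ ⁻¹' V i a where
  isOpen i a := (hV.isOpen i a).preimage hΦ
  subset i a := preimage_mono (hV.subset i a)
  pairwise_disjoint_closure i a b hab :=
    ((hV.pairwise_disjoint_closure i hab).preimage Φ).mono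
      (hΦ.closure_preimage_subset _) (hΦ.closure_preimage_subset _)
  locallyFinite := hV.locallyFinite.preimage_continuous hΦ
  iUnion_eq_univ := by simp only [← preimage_iUnion, hV.iUnion_eq_univ, preimage_univ]

end IsSigmaDiscreteRefinement

end SigmaDiscrete

namespace Metric

variable {Y : Type*} [PseudoMetricSpace Y]

section Separated

variable {ι : Type*} {s : ι → Set Y} {δ : ℝ}

theorem pairwise_disjoint_closure_of_le_dist (hδ : 0 < δ)
    (hs : Pairwise fun i j => ∀ p ∈ s i, ∀ q ∈ s j, δ ≤ dist p q) :
    Pairwise (Disjoint on fun i => closure (s i)) := by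
  refine fun i j hij => disjoint_left.2 fun z hzi hzj => ?_
  obtain ⟨p, hp, hzp⟩ := mem_closure_iff.1 hzi (δ / 2) (half_pos hδ)
  obtain ⟨q, hq, hzq⟩ := mem_closure_iff.1 hzj (δ / 2) (half_pos hδ)
  have := dist_triangle_left p q z
  linarith [hs hij p hp q hq]

theorem subsingleton_setOf_inter_ball_nonempty_of_le_dist
    (hs : Pairwise fun i j => ∀ p ∈ s i, ∀ q ∈ s j, δ ≤ dist p q) (x : Y) :
    {i | (s i ∩ ball x (δ / 2)).Nonempty}.Subsingleton := by
  rintro i ⟨p, hp, hpx⟩ j ⟨q, hq, hqx⟩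
  by_contra hij
  have := dist_triangle_right p q x
  rw [mem_ball] at hpx hqx
  linarith [hs hij p hp q hq]

end Separated

section Stone

variable {κ : Type*} [LinearOrder κ] (O : κ → Set Y)

def stoneCenters (n : ℕ) (P : Set Y) (a : κ) : Set Y :=
  {x | IsLeast {b | x ∈ O b} a ∧ ball x (3 * 2⁻¹ ^ n) ⊆ O a ∧ x ∉ P}

def stoneCovered : ℕ → Set Y
  | 0 => ∅
  | n + 1 =>
    stoneCovered n ∪ ⋃ a, ⋃ x ∈ stoneCenters O n (stoneCovered n) a, ball x (2⁻¹ ^ n)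

def stoneRefinement (n : ℕ) (a : κ) : Set Y :=
  ⋃ x ∈ stoneCenters O n (stoneCovered O n) a, ball x (2⁻¹ ^ n)

theorem mem_stoneRefinement {n : ℕ} {a : κ} {y : Y} :
    y ∈ stoneRefinement O n a ↔
      ∃ x ∈ stoneCenters O n (stoneCovered O n) a, dist y x < 2⁻¹ ^ n := by
  simp only [stoneRefinement, mem_iUnion₂, mem_ball, exists_prop]

theorem mem_stoneCovered {n : ℕ} {y : Y} :
    y ∈ stoneCovered O n ↔ ∃ m < n, ∃ a, y ∈ stoneRefinement O m a := by
  induction n with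
  | zero => simp [stoneCovered]
  | succ n ih =>
    change y ∈ stoneCovered O n ∪ ⋃ a, stoneRefinement O n a ↔ _
    rw [mem_union, ih, mem_iUnion]
    constructor
    · rintro (⟨m, hm, a, h⟩ | ⟨a, h⟩)
      exacts [⟨m, hm.trans n.lt_succ_self, a, h⟩, ⟨n, n.lt_succ_self, a, h⟩]
    · rintro ⟨m, hm, a, h⟩
      rcases Nat.lt_succ_iff_lt_or_eq.1 hm with hm | rfl
      exacts [Or.inl ⟨m, hm, a, h⟩, Or.inr ⟨a, h⟩]

theorem isOpen_stoneRefinement (n : ℕ) (a : κ) : IsOpen (stoneRefinement O n a) :=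
  isOpen_biUnion fun _ _ => isOpen_ball

theorem stoneRefinement_subset (n : ℕ) (a : κ) : stoneRefinement O n a ⊆ O a := by
  intro y hy
  obtain ⟨x, hx, hyx⟩ := (mem_stoneRefinement O).1 hy
  exact hx.2.1 (mem_ball.2 (by linarith [(by positivity : (0 : ℝ) < 2⁻¹ ^ n)]))

theorem three_mul_le_dist_of_mem_stoneCenters {n : ℕ} {P Q : Set Y} {a b : κ} (hab : a ≠ b)
    {x y : Y} (hx : x ∈ stoneCenters O n P a) (hy : y ∈ stoneCenters O n Q b) :
    3 * 2⁻¹ ^ n ≤ dist x y := by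
  by_contra! h
  have hya : y ∈ O a := hx.2.1 (mem_ball'.2 h)
  have hxb : x ∈ O b := hy.2.1 (mem_ball.2 h)
  exact hab (le_antisymm (hx.1.2 hxb) (hy.1.2 hya))

theorem stoneRefinement_separated (n : ℕ) :
    Pairwise fun a b => ∀ p ∈ stoneRefinement O n a, ∀ q ∈ stoneRefinement O n b,
      (2⁻¹ : ℝ) ^ n ≤ dist p q := by
  intro a b hab p hp q hq
  obtain ⟨x, hx, hpx⟩ := (mem_stoneRefinement O).1 hp
  obtain ⟨y, hy, hqy⟩ := (mem_stoneRefinement O).1 hq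
  have := three_mul_le_dist_of_mem_stoneCenters O hab hx hy
  have := dist_triangle4 x p q y
  rw [dist_comm x p] at this
  linarith

theorem exists_mem_stoneRefinement [WellFoundedLT κ] (hO : ∀ a, IsOpen (O a))
    (hcov : ⋃ a, O a = univ) (y : Y) : ∃ n a, y ∈ stoneRefinement O n a := by
  have hy : {b | y ∈ O b}.Nonempty := mem_iUnion.1 (hcov.symm ▸ mem_univ y)
  set a := wellFounded_lt.min _ hy
  have ha : IsLeast {b | y ∈ O b} a :=
    ⟨wellFounded_lt.min_mem _ hy, fun _ hb => wellFounded_lt.min_le hb⟩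
  obtain ⟨ε, hε, hball⟩ := isOpen_iff.1 (hO a) y ha.1
  obtain ⟨n, hn⟩ := exists_pow_lt_of_lt_one (div_pos hε three_pos) two_inv_lt_one
  by_cases hcovered : y ∈ stoneCovered O n
  · obtain ⟨m, -, b, hm⟩ := (mem_stoneCovered O).1 hcovered
    exact ⟨m, b, hm⟩
  · refine ⟨n, a, (mem_stoneRefinement O).2 ⟨y, ⟨ha, ?_, hcovered⟩, by simp⟩⟩
    exact (ball_subset_ball (by linarith)).trans hball

theorem disjoint_stoneRefinement_ball {n k m : ℕ} {a b : κ} {x : Y}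
    (hk : ball x (2⁻¹ ^ k) ⊆ stoneRefinement O n a) (hnm : n < m) (hkm : k < m) :
    Disjoint (stoneRefinement O m b) (ball x (2⁻¹ ^ (k + 1))) := by
  refine disjoint_left.2 fun y hy hyx => ?_
  obtain ⟨c, hc, hyc⟩ := (mem_stoneRefinement O).1 hy
  have hm : (2⁻¹ : ℝ) ^ m ≤ 2⁻¹ ^ (k + 1) :=
    pow_le_pow_of_le_one (by norm_num) (by norm_num) hkm
  have hcx : c ∈ ball x (2⁻¹ ^ k) := by
    have := dist_triangle_left c x y
    rw [mem_ball] at hyx ⊢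
    rw [pow_succ] at hm hyx
    linarith
  exact hc.2.2 ((mem_stoneCovered O).2 ⟨n, hnm, a, hk hcx⟩)

theorem locallyFinite_stoneRefinement [WellFoundedLT κ] (hO : ∀ a, IsOpen (O a))
    (hcov : ⋃ a, O a = univ) : LocallyFinite fun p : ℕ × κ => stoneRefinement O p.1 p.2 := by
  intro x
  obtain ⟨n, a, hx⟩ := exists_mem_stoneRefinement O hO hcov x
  obtain ⟨k, -, hk⟩ := (nhds_basis_ball_pow (by norm_num) two_inv_lt_one).mem_iff.1
    ((isOpen_stoneRefinement O n a).mem_nhds hx)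
  set B := ball x ((2⁻¹ : ℝ) ^ (n + k + 1))
  have hB {m : ℕ} (hm : m ≤ n + k) : B ⊆ ball x (2⁻¹ ^ (m + 1)) :=
    ball_subset_ball (pow_le_pow_of_le_one (by norm_num) (by norm_num) (by omega))
  have high {m : ℕ} (hm : n + k < m) (b : κ) : Disjoint (stoneRefinement O m b) B :=
    (disjoint_stoneRefinement_ball O hk (by omega) (by omega)).mono_right (hB (by omega))
  have low {m : ℕ} (hm : m ≤ n + k) :
      {b | (stoneRefinement O m b ∩ B).Nonempty}.Subsingleton := by
    refine (subsingleton_setOf_inter_ball_nonempty_of_le_dist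
      (stoneRefinement_separated O m) x).anti fun b hb => hb.mono ?_
    refine inter_subset_inter_right _ ((hB hm).trans_eq ?_)
    rw [pow_succ, div_eq_mul_inv]
  refine ⟨B, ball_mem_nhds x (by positivity), ((finite_le_nat (n + k)).biUnion
    fun m hm => (low hm).finite.image fun b => (m, b)).subset ?_⟩
  rintro ⟨m, b⟩ hmb
  have hm : m ≤ n + k := not_lt.1 fun hm => not_disjoint_iff_nonempty_inter.2 hmb (high hm b)
  exact mem_biUnion hm ⟨b, hmb, rfl⟩

end Stone

theorem exists_isSigmaDiscreteRefinement {κ : Type*} (O : κ → Set Y) (hO : ∀ a, IsOpen (O a))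
    (hcov : ⋃ a, O a = univ) : ∃ V, IsSigmaDiscreteRefinement O V := by
  obtain ⟨_, _⟩ := exists_wellFoundedLT κ
  refine ⟨stoneRefinement O, isOpen_stoneRefinement O, stoneRefinement_subset O,
    fun n => pairwise_disjoint_closure_of_le_dist (by positivity) (stoneRefinement_separated O n),
    locallyFinite_stoneRefinement O hO hcov, ?_⟩
  refine eq_univ_of_forall fun y => ?_
  obtain ⟨n, a, hy⟩ := exists_mem_stoneRefinement O hO hcov y
  exact mem_iUnion₂.2 ⟨n, a, hy⟩

end Metric

namespace PartitionOfUnity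

variable {ι X : Type*} [TopologicalSpace X] {s : Set X} (f : PartitionOfUnity ι X s)

def toLpInfty (x : X) : lp (fun _ : ι => ℝ) ∞ :=
  ⟨fun i => f i x, memℓp_infty ⟨1, by
    rintro _ ⟨i, rfl⟩
    simpa [abs_of_nonneg (f.nonneg i x)] using f.le_one i x⟩⟩

@[simp]
theorem toLpInfty_apply (x : X) (i : ι) : f.toLpInfty x i = f i x := rfl

theorem continuous_toLpInfty : Continuous f.toLpInfty := by
  classical
  refine continuous_iff_continuousAt.2 fun x₀ => ?_
  obtain ⟨I, -, hI⟩ := f.exists_finset_nhds' x₀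
  have hloc : (fun x => ∑ i ∈ I, lp.single ∞ i (f i x)) =ᶠ[𝓝 x₀] f.toLpInfty := by
    filter_upwards [hI] with x hx
    ext j
    rw [lp.coeFn_sum, Finset.sum_apply]
    simp only [lp.coeFn_single, Finset.sum_pi_single, toLpInfty_apply]
    split_ifs with hj
    · rfl
    · exact (notMem_support.1 fun hfj => hj (hx hfj)).symm
  refine ContinuousAt.congr ?_ hloc
  exact (continuous_finsetSum I fun i _ =>
    (lp.singleContinuousAddMonoidHom _ ∞ i).continuous.comp (f i).continuous).continuousAt

end PartitionOfUnity

theorem stone_sigma_discrete_refinement {X : Type*} [TopologicalSpace X]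
    [ParacompactSpace X] [T2Space X] {κ : Type*} (U : κ → Set X)
    (hopen : ∀ a, IsOpen (U a)) (hcov : ⋃ a, U a = Set.univ) :
    ∃ V : ℕ → κ → Set X,
      (∀ i a, IsOpen (V i a)) ∧ (∀ i a, V i a ⊆ U a) ∧
      (∀ i, Pairwise (Function.onFun Disjoint fun a => closure (V i a))) ∧
      LocallyFinite (fun p : ℕ × κ => V p.1 p.2) ∧
      (⋃ i, ⋃ a, V i a) = Set.univ := by
  obtain ⟨f, hf⟩ := PartitionOfUnity.exists_isSubordinate isClosed_univ U hopen hcov.ge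
  let O (a : κ) : Set (range f.toLpInfty) := {y | 0 < (y : lp (fun _ : κ => ℝ) ∞) a}
  have hO (a : κ) : IsOpen (O a) :=
    isOpen_lt continuous_const
      ((lp.lipschitzWith_one_eval ∞ a).continuous.comp continuous_subtype_val)
  have hOcov : ⋃ a, O a = univ := by
    refine eq_univ_of_forall ?_
    rintro ⟨_, x, rfl⟩
    exact mem_iUnion.2 (f.exists_pos (mem_univ x))
  obtain ⟨V, hV⟩ := Metric.exists_isSigmaDiscreteRefinement O hO hOcov
  have hVX := (hV.preimage f.continuous_toLpInfty.rangeFactorization).mono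
    fun a x hx => hf a (subset_tsupport _ (ne_of_gt hx))
  exact ⟨_, hVX.isOpen, hVX.subset, hVX.pairwise_disjoint_closure, hVX.locallyFinite,
    hVX.iUnion_eq_univ⟩
end

section
/- Let X be a topological space, B ⊆ X closed, U ⊆ B relatively open, and c : closure(U) × [0,1] → X a local collar of B (an embedding with c(x,0)=x for all x, c⁻¹(B) = closure(U) × {0}, and c(U × [0,1)) open in X). If g : closure(U) → (0,1] is continuous, then the map h(x,t) := c(x, t·g(x)) is also a local collar of B in X; moreover if c is a closed embedding, so is h. -/
/-- `c` is a local collar of the closed set `B` in `X`, with base `closure U`,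
where `U` is relatively open in `B`. -/
def IsLocalCollar {X : Type*} [TopologicalSpace X] (B U : Set X) (c : X → ℝ → X) : Prop :=
  U ⊆ B ∧ IsOpen ((↑) ⁻¹' U : Set B) ∧
  Topology.IsEmbedding (fun p : ↥(closure U) × ↥(Set.Icc (0:ℝ) 1) => c p.1.1 p.2.1) ∧
  (∀ x ∈ closure U, c x 0 = x) ∧
  (∀ x ∈ closure U, ∀ t ∈ Set.Icc (0:ℝ) 1, c x t ∈ B → t = 0) ∧
  IsOpen {y : X | ∃ x ∈ U, ∃ t ∈ Set.Ico (0:ℝ) 1, y = c x t}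

/-- Image of the full domain `closure U × [0,1]` of a local collar. -/
def collarImage {X : Type*} [TopologicalSpace X] (U : Set X) (c : X → ℝ → X) : Set X :=
  {y | ∃ x ∈ closure U, ∃ t ∈ Set.Icc (0:ℝ) 1, y = c x t}

/-!
Rescaling each fibre `{x} × [0,1]` by `t ↦ t * g x` is a self-embedding `φ` of
`closure U × [0,1]` with closed range `{(x, s) | s ≤ g x}`, so `h = c ∘ φ` is an embedding, and a
closed one when `c` is. The map `φ` sends `U × [0,1)` onto its intersection with the open set
`{(x, s) | s < g x}`; as `c` is an embedding, the image of `U × [0,1)` under `h` is therefore the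
open image under `c` intersected with an open subset of `X`.
-/

open Set Topology

theorem Topology.IsInducing.isOpen_image_inter {α β : Type*} [TopologicalSpace α]
    [TopologicalSpace β] {e : α → β} (he : IsInducing e) {W V : Set α}
    (hW : IsOpen (e '' W)) (hV : IsOpen V) : IsOpen (e '' (W ∩ V)) := by
  obtain ⟨O, hO, rfl⟩ := he.isOpen_iff.mp hV
  rw [image_inter_preimage]
  exact hW.inter hO

section FiberScale

variable {S : Type*} {g : S → ℝ}

def fiberScale (g : S → ℝ) (hg : ∀ x, g x ∈ Ioc (0 : ℝ) 1) (p : S × Icc (0 : ℝ) 1) :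
    S × Icc (0 : ℝ) 1 :=
  (p.1, ⟨p.2 * g p.1, unitInterval.mul_mem p.2.2 (Ioc_subset_Icc_self (hg p.1))⟩)

variable (hg : ∀ x, g x ∈ Ioc (0 : ℝ) 1)

theorem continuous_fiberScale [TopologicalSpace S] (hgc : Continuous g) :
    Continuous (fiberScale g hg) :=
  continuous_fst.prodMk <| Continuous.subtype_mk
    ((continuous_subtype_val.comp continuous_snd).mul (hgc.comp continuous_fst)) _

theorem isEmbedding_fiberScale [TopologicalSpace S] (hgc : Continuous g) :
    IsEmbedding (fiberScale g hg) := by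
  let unscale : S × Icc (0 : ℝ) 1 → S × ℝ := fun p => (p.1, p.2 / g p.1)
  have hunscale : Continuous unscale :=
    continuous_fst.prodMk <| (continuous_subtype_val.comp continuous_snd).div
      (hgc.comp continuous_fst) fun p => (hg p.1).1.ne'
  have hcomp : unscale ∘ fiberScale g hg = Prod.map id Subtype.val := by
    funext p
    exact Prod.ext rfl (mul_div_cancel_right₀ _ (hg p.1).1.ne')
  refine IsEmbedding.of_comp (continuous_fiberScale hg hgc) hunscale ?_
  rw [hcomp]
  exact IsEmbedding.id.prodMap IsEmbedding.subtypeVal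

theorem range_fiberScale : range (fiberScale g hg) = {p | (p.2 : ℝ) ≤ g p.1} := by
  ext ⟨x, s⟩
  have hgx := (hg x).1
  constructor
  · rintro ⟨⟨y, t⟩, h⟩
    obtain ⟨rfl, rfl⟩ := Prod.ext_iff.mp h
    exact mul_le_of_le_one_left hgx.le t.2.2
  · intro hs
    refine ⟨(x, ⟨s / g x, div_nonneg s.2.1 hgx.le, (div_le_one hgx).mpr hs⟩), ?_⟩
    simp [fiberScale, div_mul_cancel₀ _ hgx.ne']

theorem image_fiberScale_prod_lt_one (A : Set S) :
    fiberScale g hg '' (A ×ˢ {t : Icc (0 : ℝ) 1 | (t : ℝ) < 1}) =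
      A ×ˢ {t : Icc (0 : ℝ) 1 | (t : ℝ) < 1} ∩ {p | (p.2 : ℝ) < g p.1} := by
  ext ⟨x, s⟩
  have hgx := hg x
  constructor
  · rintro ⟨⟨y, t⟩, ⟨hy, ht⟩, h⟩
    obtain ⟨rfl, rfl⟩ := Prod.ext_iff.mp h
    have hlt : (t : ℝ) * g y < g y := mul_lt_of_lt_one_left hgx.1 ht
    exact ⟨⟨hy, hlt.trans_le hgx.2⟩, hlt⟩
  · rintro ⟨⟨hx, -⟩, hs⟩
    refine ⟨(x, ⟨s / g x, div_nonneg s.2.1 hgx.1.le, (div_le_one hgx.1).mpr hs.le⟩),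
      ⟨hx, (div_lt_one hgx.1).mpr hs⟩, ?_⟩
    simp [fiberScale, div_mul_cancel₀ _ hgx.1.ne']

end FiberScale

section CollarMap

variable {X : Type*} [TopologicalSpace X]

def collarMap (U : Set X) (c : X → ℝ → X) (p : closure U × Icc (0 : ℝ) 1) : X :=
  c p.1 p.2

theorem collarImage_eq_range (U : Set X) (c : X → ℝ → X) :
    collarImage U c = range (collarMap U c) := by
  ext y
  constructor
  · rintro ⟨x, hx, t, ht, rfl⟩
    exact ⟨(⟨x, hx⟩, ⟨t, ht⟩), rfl⟩
  · rintro ⟨p, rfl⟩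
    exact ⟨p.1, p.1.2, p.2, p.2.2, rfl⟩

theorem setOf_collar_Ico_eq_image (U : Set X) (c : X → ℝ → X) :
    {y | ∃ x ∈ U, ∃ t ∈ Ico (0 : ℝ) 1, y = c x t} =
      collarMap U c ''
        ((((↑) : closure U → X) ⁻¹' U) ×ˢ {t : Icc (0 : ℝ) 1 | (t : ℝ) < 1}) := by
  ext y
  constructor
  · rintro ⟨x, hx, t, ht, rfl⟩
    exact ⟨(⟨x, subset_closure hx⟩, ⟨t, ht.1, ht.2.le⟩), ⟨hx, ht.2⟩, rfl⟩
  · rintro ⟨p, ⟨hp, hp1⟩, rfl⟩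
    exact ⟨p.1, hp, p.2, ⟨p.2.2.1, hp1⟩, rfl⟩

end CollarMap

theorem localCollar_continuous_cut_general {X : Type*} [TopologicalSpace X]
    (B U : Set X) (c : X → ℝ → X) (hc : IsLocalCollar B U c)
    (g : X → ℝ) (hg : ContinuousOn g (closure U))
    (hg1 : ∀ x ∈ closure U, g x ∈ Set.Ioc (0:ℝ) 1) :
    IsLocalCollar B U (fun x t => c x (t * g x)) ∧
      (IsClosed (collarImage U c) →
        IsClosed (collarImage U (fun x t => c x (t * g x)))) := by
  obtain ⟨hUB, hUopen, hemb, hc0, hcB, hcopen⟩ := hc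
  have hgU : ∀ x : closure U, g x ∈ Ioc (0 : ℝ) 1 := fun x => hg1 x x.2
  have hgc : Continuous fun x : closure U => g x := hg.domRestrict
  have hcut : collarMap U (fun x t => c x (t * g x)) = collarMap U c ∘ fiberScale _ hgU := rfl
  refine ⟨⟨hUB, hUopen, hemb.comp (isEmbedding_fiberScale hgU hgc),
    fun x hx => by simpa using hc0 x hx, fun x hx t ht hB => ?_, ?_⟩, fun hclosed => ?_⟩
  · have hgx := hg1 x hx
    have := hcB x hx _ (unitInterval.mul_mem ht (Ioc_subset_Icc_self hgx)) hB
    exact (mul_eq_zero.mp this).resolve_right hgx.1.ne'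
  · rw [setOf_collar_Ico_eq_image, hcut, image_comp, image_fiberScale_prod_lt_one]
    rw [setOf_collar_Ico_eq_image] at hcopen
    exact hemb.isInducing.isOpen_image_inter hcopen <|
      isOpen_lt (continuous_subtype_val.comp continuous_snd) (hgc.comp continuous_fst)
  · rw [collarImage_eq_range] at hclosed ⊢
    rw [hcut, range_comp, range_fiberScale]
    exact (IsClosedEmbedding.mk hemb hclosed).isClosedMap _ <|
      isClosed_le (continuous_subtype_val.comp continuous_snd) (hgc.comp continuous_fst)

theorem localCollar_continuous_cut {X : Type*} [TopologicalSpace X]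
    (B U : Set X) (hB : IsClosed B) (c : X → ℝ → X) (hc : IsLocalCollar B U c)
    (g : X → ℝ) (hg : ContinuousOn g (closure U))
    (hg1 : ∀ x ∈ closure U, g x ∈ Set.Ioc (0:ℝ) 1) :
    IsLocalCollar B U (fun x t => c x (t * g x)) ∧
      (IsClosed (collarImage U c) →
        IsClosed (collarImage U (fun x t => c x (t * g x)))) :=
  localCollar_continuous_cut_general B U c hc g hg hg1
end

section
/- Let X be a topological space, B ⊆ X a closed subspace that is paracompact and Hausdorff in the subspace topology, and A ⊆ X a closed set with A ∩ B = ∅. If c : B × [0,1] → X is a collar of B in X, then there exists a continuous function d : B → (0,1] such that c(x,t) ∉ A for all x ∈ B and all t ∈ [0, d(x)]. -/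
/-!
Since `A` is closed and misses `B`, continuity of the collar at `(x, 0)` gives, for each
`x ∈ B`, a height `r > 0` such that `c y [0, r]` avoids `A` for all `y` near `x`. For each
`x` the admissible heights form an interval, so a partition of unity on the paracompact
space `B` glues these local constants into a continuous admissible height function.
-/

open Set Topology unitInterval

theorem convex_setOf_mem_Ioc_forall_Icc (P : ℝ → Prop) :
    Convex ℝ {r : ℝ | r ∈ Ioc 0 1 ∧ ∀ s ∈ Icc 0 r, P s} := by
  have hlower : IsLowerSet {r : ℝ | ∀ s ∈ Icc 0 r, P s} :=
    fun _ _ hba ha s hs => ha s ⟨hs.1, hs.2.trans hba⟩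
  exact (convex_Ioc 0 1).inter hlower.ordConnected.convex

theorem Continuous.exists_eventually_forall_le_mem {Y Z : Type*} [TopologicalSpace Y]
    [TopologicalSpace Z] {g : Y × I → Z} (hg : Continuous g) {W : Set Z} (hW : IsOpen W)
    {x : Y} (hx : g (x, 0) ∈ W) :
    ∃ r ∈ Ioc (0 : ℝ) 1, ∀ᶠ y in 𝓝 x, ∀ s : I, (s : ℝ) ≤ r → g (y, s) ∈ W := by
  have hnhds : ∀ᶠ p in 𝓝 x ×ˢ 𝓝 0, g p ∈ W :=
    nhds_prod_eq (x := x) (y := (0 : I)) ▸ hg.continuousAt.preimage_mem_nhds (hW.mem_nhds hx)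
  obtain ⟨P, hP, Q, hQ, hPQ⟩ := Filter.eventually_prod_iff.1 hnhds
  obtain ⟨u, hu0, hu⟩ := exists_Ico_subset_of_mem_nhds hQ ⟨1, zero_lt_one⟩
  obtain ⟨r, h0r, hru⟩ := exists_between hu0
  refine ⟨r, ⟨h0r, r.2.2⟩, hP.mono fun y hy s hs => hPQ hy (hu ⟨s.2.1, ?_⟩)⟩
  exact (Subtype.coe_le_coe.1 hs).trans_lt hru

theorem collar_cut_avoiding_closed_set {X : Type*} [TopologicalSpace X]
    (B A : Set X) (hB : IsClosed B) [ParacompactSpace B] [T2Space B]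
    (hA : IsClosed A) (hAB : A ∩ B = ∅)
    (c : X → ℝ → X) (hc : IsLocalCollar B B c) :
    ∃ d : X → ℝ, ContinuousOn d B ∧ (∀ x ∈ B, d x ∈ Set.Ioc (0:ℝ) 1) ∧
      ∀ x ∈ B, ∀ t ∈ Set.Icc (0:ℝ) (d x), c x t ∉ A := by
  classical
  obtain ⟨-, -, hemb, hc0, -, -⟩ := hc
  rw [hB.closure_eq] at hemb hc0
  have hlocal (x : B) :
      ∃ r : ℝ, ∀ᶠ y : B in 𝓝 x, r ∈ Ioc 0 1 ∧ ∀ s ∈ Icc 0 r, c y s ∉ A := by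
    have hx : (x : X) ∉ A := fun hxA => hAB.subset ⟨hxA, x.2⟩
    obtain ⟨r, hr, hev⟩ := hemb.continuous.exists_eventually_forall_le_mem hA.isOpen_compl
      (x := x) (by simpa [hc0 x x.2] using hx)
    exact ⟨r, hev.mono fun y hy => ⟨hr, fun s hs => hy ⟨s, hs.1, hs.2.trans hr.2⟩ hs.2⟩⟩
  obtain ⟨f, hf⟩ := exists_continuous_forall_mem_convex_of_local_const
    (fun x : B => convex_setOf_mem_Ioc_forall_Icc fun s => c x s ∉ A) hlocal
  refine ⟨fun x => if h : x ∈ B then f ⟨x, h⟩ else 1, ?_, fun x hx => ?_, fun x hx => ?_⟩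
  · rw [continuousOn_iff_continuous_domRestrict, domRestrict_dite]
    exact f.continuous
  · simpa [hx] using (hf ⟨x, hx⟩).1
  · simpa [hx] using (hf ⟨x, hx⟩).2
end

section
/- Let X be a metric space, B ⊆ X closed, and c : B × [−1,1] → X a bicollar whose restrictions c⁻ to B × [−1,0] and c⁺ to B × [0,1] are bi-Lipschitz onto their images with inverse-Lipschitz constants iL(c⁻) and iL(c⁺). Suppose there is α ≥ 1 such that for all x,y ∈ B, s ∈ [−1,0], t ∈ [0,1] there exists z ∈ B with dist(c(x,s), z) + dist(z, c(y,t)) ≤ α·dist(c(x,s), c(y,t)). Then c is bi-Lipschitz onto its image with inverse-Lipschitz constant at most α·max(iL(c⁻), iL(c⁺)). -/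
/-!
For two points on the same side of `B` the bounds are those of `c⁻` or `c⁺`. For `c(x,s)` and
`c(y,t)` on opposite sides, go through `c(x,0)` for the Lipschitz bound, and through the point
`z = c(z,0)` of the midpoint condition for the inverse bound: with `M = max iL(c⁻) iL(c⁺)`,
`dist x y + |s - t| ≤ (dist x z + |s|) + (dist z y + |t|)
  ≤ M · (dist (c(x,s)) z + dist z (c(y,t))) ≤ α · M · dist (c(x,s)) (c(y,t))`.
-/

open Set

theorem forall_Icc_neg_one_one_of_halves {α : Type*} {B : Set α} {P : α → ℝ → α → ℝ → Prop}
    (hsymm : ∀ x s y t, P x s y t → P y t x s)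
    (hneg : ∀ x ∈ B, ∀ y ∈ B, ∀ s ∈ Icc (-1 : ℝ) 0, ∀ t ∈ Icc (-1 : ℝ) 0, P x s y t)
    (hpos : ∀ x ∈ B, ∀ y ∈ B, ∀ s ∈ Icc (0 : ℝ) 1, ∀ t ∈ Icc (0 : ℝ) 1, P x s y t)
    (hcross : ∀ x ∈ B, ∀ y ∈ B, ∀ s ∈ Icc (-1 : ℝ) 0, ∀ t ∈ Icc (0 : ℝ) 1, P x s y t) :
    ∀ x ∈ B, ∀ y ∈ B, ∀ s ∈ Icc (-1 : ℝ) 1, ∀ t ∈ Icc (-1 : ℝ) 1, P x s y t := by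
  intro x hx y hy s ⟨hs₁, hs₂⟩ t ⟨ht₁, ht₂⟩
  rcases le_total s 0 with hs | hs <;> rcases le_total t 0 with ht | ht
  · exact hneg x hx y hy s ⟨hs₁, hs⟩ t ⟨ht₁, ht⟩
  · exact hcross x hx y hy s ⟨hs₁, hs⟩ t ⟨ht, ht₂⟩
  · exact hsymm y t x s (hcross y hy x hx t ⟨ht₁, ht⟩ s ⟨hs, hs₂⟩)
  · exact hpos x hx y hy s ⟨hs, hs₂⟩ t ⟨ht, ht₂⟩

section Bicollar

variable {X : Type*} [PseudoMetricSpace X] {B : Set X} {c : X → ℝ → X}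

theorem dist_le_max_mul_of_halves {Lm Lp : ℝ}
    (hLm : ∀ x ∈ B, ∀ y ∈ B, ∀ s ∈ Icc (-1 : ℝ) 0, ∀ t ∈ Icc (-1 : ℝ) 0,
      dist (c x s) (c y t) ≤ Lm * (dist x y + |s - t|))
    (hLp : ∀ x ∈ B, ∀ y ∈ B, ∀ s ∈ Icc (0 : ℝ) 1, ∀ t ∈ Icc (0 : ℝ) 1,
      dist (c x s) (c y t) ≤ Lp * (dist x y + |s - t|))
    {x y : X} (hx : x ∈ B) (hy : y ∈ B) {s t : ℝ} (hs : s ∈ Icc (-1 : ℝ) 0)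
    (ht : t ∈ Icc (0 : ℝ) 1) :
    dist (c x s) (c y t) ≤ max Lm Lp * (dist x y + |s - t|) := by
  have hst : |s - t| = |s - 0| + |0 - t| := by
    rw [abs_of_nonpos (by linarith [hs.2, ht.1]), abs_of_nonpos (by linarith [hs.2]),
      abs_of_nonpos (by linarith [ht.1])]
    ring
  calc dist (c x s) (c y t) ≤ dist (c x s) (c x 0) + dist (c x 0) (c y t) := dist_triangle _ _ _
    _ ≤ Lm * (dist x x + |s - 0|) + Lp * (dist x y + |0 - t|) :=
        add_le_add (hLm x hx x hx s hs 0 (by norm_num)) (hLp x hx y hy 0 (by norm_num) t ht)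
    _ ≤ max Lm Lp * (dist x x + |s - 0|) + max Lm Lp * (dist x y + |0 - t|) := by
        gcongr
        exacts [le_max_left _ _, le_max_right _ _]
    _ = max Lm Lp * (dist x y + |s - t|) := by rw [dist_self, hst]; ring

theorem le_max_mul_add_dist_of_halves {iLm iLp : ℝ} (h0 : ∀ x ∈ B, c x 0 = x)
    (hiLm : ∀ x ∈ B, ∀ y ∈ B, ∀ s ∈ Icc (-1 : ℝ) 0, ∀ t ∈ Icc (-1 : ℝ) 0,
      dist x y + |s - t| ≤ iLm * dist (c x s) (c y t))
    (hiLp : ∀ x ∈ B, ∀ y ∈ B, ∀ s ∈ Icc (0 : ℝ) 1, ∀ t ∈ Icc (0 : ℝ) 1,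
      dist x y + |s - t| ≤ iLp * dist (c x s) (c y t))
    {x y z : X} (hx : x ∈ B) (hy : y ∈ B) (hz : z ∈ B) {s t : ℝ} (hs : s ∈ Icc (-1 : ℝ) 0)
    (ht : t ∈ Icc (0 : ℝ) 1) :
    dist x y + |s - t| ≤ max iLm iLp * (dist (c x s) z + dist z (c y t)) := by
  have hxz := hiLm x hx z hz s hs 0 (by norm_num)
  have hzy := hiLp z hz y hy 0 (by norm_num) t ht
  rw [h0 z hz] at hxz hzy
  calc dist x y + |s - t| ≤ (dist x z + |s - 0|) + (dist z y + |0 - t|) := by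
        linarith [dist_triangle x z y, abs_sub_le s 0 t]
    _ ≤ iLm * dist (c x s) z + iLp * dist z (c y t) := add_le_add hxz hzy
    _ ≤ max iLm iLp * (dist (c x s) z + dist z (c y t)) := by
        rw [mul_add]
        gcongr
        exacts [le_max_left _ _, le_max_right _ _]

theorem nonneg_of_one_le_mul_dist {k : ℝ} {p q : X} (h : 1 ≤ k * dist p q) : 0 ≤ k := by
  by_contra hk
  nlinarith [dist_nonneg (x := p) (y := q)]

end Bicollar

theorem bicollar_biLipschitz_of_midpoint_condition_general {X : Type*} [MetricSpace X]
    (B : Set X) (c : X → ℝ → X)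
    (h0 : ∀ x ∈ B, c x 0 = x)
    (Lm Lp iLm iLp : ℝ)
    -- the two restrictions are bi-Lipschitz onto their images:
    (hLm : ∀ x ∈ B, ∀ y ∈ B, ∀ s ∈ Set.Icc (-1:ℝ) 0, ∀ t ∈ Set.Icc (-1:ℝ) 0,
      dist (c x s) (c y t) ≤ Lm * (dist x y + |s - t|))
    (hLp : ∀ x ∈ B, ∀ y ∈ B, ∀ s ∈ Set.Icc (0:ℝ) 1, ∀ t ∈ Set.Icc (0:ℝ) 1,
      dist (c x s) (c y t) ≤ Lp * (dist x y + |s - t|))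
    (hiLm : ∀ x ∈ B, ∀ y ∈ B, ∀ s ∈ Set.Icc (-1:ℝ) 0, ∀ t ∈ Set.Icc (-1:ℝ) 0,
      dist x y + |s - t| ≤ iLm * dist (c x s) (c y t))
    (hiLp : ∀ x ∈ B, ∀ y ∈ B, ∀ s ∈ Set.Icc (0:ℝ) 1, ∀ t ∈ Set.Icc (0:ℝ) 1,
      dist x y + |s - t| ≤ iLp * dist (c x s) (c y t))
    (α : ℝ) (hα : 1 ≤ α)
    (hmid : ∀ x ∈ B, ∀ y ∈ B, ∀ s ∈ Set.Icc (-1:ℝ) 0, ∀ t ∈ Set.Icc (0:ℝ) 1,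
      ∃ z ∈ B, dist (c x s) z + dist z (c y t) ≤ α * dist (c x s) (c y t)) :
    (∃ K : ℝ, ∀ x ∈ B, ∀ y ∈ B, ∀ s ∈ Set.Icc (-1:ℝ) 1, ∀ t ∈ Set.Icc (-1:ℝ) 1,
      dist (c x s) (c y t) ≤ K * (dist x y + |s - t|)) ∧
    ∀ x ∈ B, ∀ y ∈ B, ∀ s ∈ Set.Icc (-1:ℝ) 1, ∀ t ∈ Set.Icc (-1:ℝ) 1,
      dist x y + |s - t| ≤ α * max iLm iLp * dist (c x s) (c y t) := by
  refine ⟨⟨max Lm Lp, forall_Icc_neg_one_one_of_halves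
    (fun x s y t h => by rwa [dist_comm, dist_comm y, abs_sub_comm])
    (fun x hx y hy s hs t ht =>
      (hLm x hx y hy s hs t ht).trans (by gcongr; exact le_max_left _ _))
    (fun x hx y hy s hs t ht =>
      (hLp x hx y hy s hs t ht).trans (by gcongr; exact le_max_right _ _))
    (fun x hx y hy s hs t ht => dist_le_max_mul_of_halves hLm hLp hx hy hs ht)⟩, ?_⟩
  intro x hx
  have hM : 0 ≤ max iLm iLp := (nonneg_of_one_le_mul_dist (p := c x (-1)) (q := c x 0) (by
    simpa using hiLm x hx x hx (-1) (by norm_num) 0 (by norm_num))).trans (le_max_left _ _)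
  have hmM : iLm ≤ α * max iLm iLp := (le_max_left _ _).trans (le_mul_of_one_le_left hM hα)
  have hpM : iLp ≤ α * max iLm iLp := (le_max_right _ _).trans (le_mul_of_one_le_left hM hα)
  refine forall_Icc_neg_one_one_of_halves
    (P := fun x s y t => dist x y + |s - t| ≤ α * max iLm iLp * dist (c x s) (c y t))
    (fun x s y t h => by rwa [dist_comm y, dist_comm (c y t), abs_sub_comm])
    (fun x hx y hy s hs t ht =>
      (hiLm x hx y hy s hs t ht).trans (mul_le_mul_of_nonneg_right hmM dist_nonneg))
    (fun x hx y hy s hs t ht =>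
      (hiLp x hx y hy s hs t ht).trans (mul_le_mul_of_nonneg_right hpM dist_nonneg))
    (fun x hx y hy s hs t ht => ?_) x hx
  obtain ⟨z, hz, hzd⟩ := hmid x hx y hy s hs t ht
  calc dist x y + |s - t| ≤ max iLm iLp * (dist (c x s) z + dist z (c y t)) :=
        le_max_mul_add_dist_of_halves h0 hiLm hiLp hx hy hz hs ht
    _ ≤ max iLm iLp * (α * dist (c x s) (c y t)) := mul_le_mul_of_nonneg_left hzd hM
    _ = α * max iLm iLp * dist (c x s) (c y t) := by ring

theorem bicollar_biLipschitz_of_midpoint_condition {X : Type*} [MetricSpace X]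
    (B : Set X) (hB : IsClosed B) (c : X → ℝ → X)
    (hemb : Topology.IsEmbedding (fun p : ↥B × ↥(Set.Icc (-1:ℝ) 1) => c p.1.1 p.2.1))
    (h0 : ∀ x ∈ B, c x 0 = x)
    (hopen : IsOpen {y : X | ∃ x ∈ B, ∃ t ∈ Set.Ioo (-1:ℝ) 1, y = c x t})
    (Lm Lp iLm iLp : ℝ)
    -- the two restrictions are bi-Lipschitz onto their images:
    (hLm : ∀ x ∈ B, ∀ y ∈ B, ∀ s ∈ Set.Icc (-1:ℝ) 0, ∀ t ∈ Set.Icc (-1:ℝ) 0,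
      dist (c x s) (c y t) ≤ Lm * (dist x y + |s - t|))
    (hLp : ∀ x ∈ B, ∀ y ∈ B, ∀ s ∈ Set.Icc (0:ℝ) 1, ∀ t ∈ Set.Icc (0:ℝ) 1,
      dist (c x s) (c y t) ≤ Lp * (dist x y + |s - t|))
    (hiLm : ∀ x ∈ B, ∀ y ∈ B, ∀ s ∈ Set.Icc (-1:ℝ) 0, ∀ t ∈ Set.Icc (-1:ℝ) 0,
      dist x y + |s - t| ≤ iLm * dist (c x s) (c y t))
    (hiLp : ∀ x ∈ B, ∀ y ∈ B, ∀ s ∈ Set.Icc (0:ℝ) 1, ∀ t ∈ Set.Icc (0:ℝ) 1,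
      dist x y + |s - t| ≤ iLp * dist (c x s) (c y t))
    (α : ℝ) (hα : 1 ≤ α)
    (hmid : ∀ x ∈ B, ∀ y ∈ B, ∀ s ∈ Set.Icc (-1:ℝ) 0, ∀ t ∈ Set.Icc (0:ℝ) 1,
      ∃ z ∈ B, dist (c x s) z + dist z (c y t) ≤ α * dist (c x s) (c y t)) :
    (∃ K : ℝ, ∀ x ∈ B, ∀ y ∈ B, ∀ s ∈ Set.Icc (-1:ℝ) 1, ∀ t ∈ Set.Icc (-1:ℝ) 1,
      dist (c x s) (c y t) ≤ K * (dist x y + |s - t|)) ∧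
    ∀ x ∈ B, ∀ y ∈ B, ∀ s ∈ Set.Icc (-1:ℝ) 1, ∀ t ∈ Set.Icc (-1:ℝ) 1,
      dist x y + |s - t| ≤ α * max iLm iLp * dist (c x s) (c y t) :=
  bicollar_biLipschitz_of_midpoint_condition_general B c h0 Lm Lp iLm iLp hLm hLp hiLm hiLp α hα
    hmid
end
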